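/- Let f and g be holomorphic modular forms of weights k and l respectively on a subgroup Γ′ of SL₂(ℤ). Then the first Rankin–Cohen bracket [f,g]₁ = k·f·g′ − l·f′·g (with f′ = (1/2πi) df/dτ) is a modular form of weight k+l+2 on Γ′. -/

import Mathlib

open Complex

/-- The open upper half plane, as a subset of `ℂ`. -/
def UpperH : Set ℂ := {z : ℂ | 0 < z.im}

/-- The normalized derivative `D = (1/2πi) d/dτ`. -/
noncomputable def normDeriv (f : ℂ → ℂ) (z : ℂ) : ℂ :=
  (2 * Real.pi * Complex.I)⁻¹ * deriv f z

/-- `f` transforms like a modular form of weight `k` on `Γ′ ⊆ SL₂(ℤ)`. -/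
def WeightKInvariant (Γ' : Subgroup (Matrix.SpecialLinearGroup (Fin 2) ℤ)) (k : ℕ)
    (f : ℂ → ℂ) : Prop :=
  ∀ g ∈ Γ', ∀ z ∈ UpperH,
    f ((g.1 0 0 * z + g.1 0 1) / (g.1 1 0 * z + g.1 1 1)) =
      (g.1 1 0 * z + g.1 1 1) ^ k * f z


/-!
Differentiating `f (γ z) = (c z + d) ^ k f z` with the chain rule, and using
`d(γ z)/dz = (c z + d)⁻²`, gives
`f' (γ z) = (c z + d) ^ (k + 2) f' z + k c (c z + d) ^ (k + 1) f z`.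
The inhomogeneous term is the same multiple of `f g` in `k f g'` and in `l f' g`,
so it cancels in the bracket, which therefore transforms with weight `k + l + 2`.
-/

open Filter Topology

lemma isOpen_upperH : IsOpen UpperH := isOpen_lt continuous_const continuous_im

lemma moebius_mem_upperH (γ : Matrix.SpecialLinearGroup (Fin 2) ℤ) {z : ℂ} (hz : z ∈ UpperH) :
    (γ.1 0 0 * z + γ.1 0 1) / (γ.1 1 0 * z + γ.1 1 1) ∈ UpperH := by
  have h := (γ • (⟨z, hz⟩ : UpperHalfPlane)).im_pos
  rw [UpperHalfPlane.im, UpperHalfPlane.coe_specialLinearGroup_apply] at h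
  simpa [UpperH] using h

lemma denom_ne_zero_of_mem_upperH (γ : Matrix.SpecialLinearGroup (Fin 2) ℤ) {z : ℂ}
    (hz : z ∈ UpperH) : (γ.1 1 0 * z + γ.1 1 1 : ℂ) ≠ 0 := by
  intro h
  have hmem := moebius_mem_upperH γ hz
  simp [UpperH, h] at hmem

lemma hasDerivAt_mul_add (c d z : ℂ) : HasDerivAt (fun w => c * w + d) c z := by
  simpa using ((hasDerivAt_id z).const_mul c).add_const d

section Moebius

variable {a b c d z : ℂ}

lemma hasDerivAt_moebius (hdet : a * d - b * c = 1) (hz : c * z + d ≠ 0) :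
    HasDerivAt (fun w => (a * w + b) / (c * w + d)) (1 / (c * z + d) ^ 2) z := by
  have hnum_eq : a * (c * z + d) - (a * z + b) * c = 1 := by linear_combination hdet
  have h := (hasDerivAt_mul_add a b z).div (hasDerivAt_mul_add c d z) hz
  rw [hnum_eq] at h
  exact h

lemma deriv_apply_moebius {f : ℂ → ℂ} (k : ℕ) (hdet : a * d - b * c = 1) (hz : c * z + d ≠ 0)
    (hfz : DifferentiableAt ℂ f z) (hfγz : DifferentiableAt ℂ f ((a * z + b) / (c * z + d)))
    (hfk : (fun w => f ((a * w + b) / (c * w + d))) =ᶠ[𝓝 z] fun w => (c * w + d) ^ k * f w) :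
    deriv f ((a * z + b) / (c * z + d)) =
      k * c * (c * z + d) ^ (k + 1) * f z + (c * z + d) ^ (k + 2) * deriv f z := by
  have hchain : HasDerivAt (fun w => (c * w + d) ^ k * f w)
      (deriv f ((a * z + b) / (c * z + d)) * (1 / (c * z + d) ^ 2)) z :=
    (hfγz.hasDerivAt.comp z (hasDerivAt_moebius hdet hz)).congr_of_eventuallyEq hfk.symm
  have hprod : HasDerivAt (fun w => (c * w + d) ^ k * f w)
      (k * (c * z + d) ^ (k - 1) * c * f z + (c * z + d) ^ k * deriv f z) z :=
    ((hasDerivAt_mul_add c d z).pow k).mul hfz.hasDerivAt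
  have hγz : deriv f ((a * z + b) / (c * z + d)) =
      (k * (c * z + d) ^ (k - 1) * c * f z + (c * z + d) ^ k * deriv f z) * (c * z + d) ^ 2 := by
    rw [← hchain.unique hprod, one_div, inv_mul_cancel_right₀ (pow_ne_zero 2 hz)]
  rw [hγz]
  rcases k with _ | k
  · simp [mul_comm]
  · push_cast
    ring

end Moebius

lemma normDeriv_apply_moebius {Γ' : Subgroup (Matrix.SpecialLinearGroup (Fin 2) ℤ)} {k : ℕ}
    {f : ℂ → ℂ} (hf : DifferentiableOn ℂ f UpperH) (hfk : WeightKInvariant Γ' k f)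
    {γ : Matrix.SpecialLinearGroup (Fin 2) ℤ} (hγ : γ ∈ Γ') {z : ℂ} (hz : z ∈ UpperH) :
    normDeriv f ((γ.1 0 0 * z + γ.1 0 1) / (γ.1 1 0 * z + γ.1 1 1)) =
      (2 * Real.pi * I)⁻¹ * k * γ.1 1 0 * (γ.1 1 0 * z + γ.1 1 1) ^ (k + 1) * f z +
        (γ.1 1 0 * z + γ.1 1 1) ^ (k + 2) * normDeriv f z := by
  have hdet : (γ.1 0 0 * γ.1 1 1 - γ.1 0 1 * γ.1 1 0 : ℂ) = 1 := by
    exact_mod_cast (Matrix.det_fin_two γ.1).symm.trans γ.2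
  have hdiff {w : ℂ} (hw : w ∈ UpperH) : DifferentiableAt ℂ f w :=
    hf.differentiableAt (isOpen_upperH.mem_nhds hw)
  have hlaw : (fun w => f ((γ.1 0 0 * w + γ.1 0 1) / (γ.1 1 0 * w + γ.1 1 1))) =ᶠ[𝓝 z]
      fun w => (γ.1 1 0 * w + γ.1 1 1) ^ k * f w :=
    eventually_of_mem (isOpen_upperH.mem_nhds hz) (hfk γ hγ)
  rw [normDeriv, normDeriv, deriv_apply_moebius k hdet (denom_ne_zero_of_mem_upperH γ hz)
    (hdiff hz) (hdiff (moebius_mem_upperH γ hz)) hlaw]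
  ring

/-- **The first Rankin–Cohen bracket has weight `k + l + 2`.**
If `f`, `g` are holomorphic modular forms of weights `k`, `l` on a subgroup
`Γ′ ⊆ SL₂(ℤ)`, then `[f,g]₁ = k·f·g′ − l·f′·g` (with `f′ = (1/2πi) df/dτ`) is a
holomorphic modular form of weight `k + l + 2` on `Γ′`. -/
theorem rankin_cohen_bracket_one (Γ' : Subgroup (Matrix.SpecialLinearGroup (Fin 2) ℤ))
    (k l : ℕ) (f g : ℂ → ℂ)
    (hf : DifferentiableOn ℂ f UpperH) (hg : DifferentiableOn ℂ g UpperH)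
    (hfk : WeightKInvariant Γ' k f) (hgl : WeightKInvariant Γ' l g) :
    DifferentiableOn ℂ
        (fun z => (k : ℂ) * f z * normDeriv g z - (l : ℂ) * normDeriv f z * g z)
        UpperH ∧
      WeightKInvariant Γ' (k + l + 2)
        (fun z => (k : ℂ) * f z * normDeriv g z - (l : ℂ) * normDeriv f z * g z) := by
  constructor
  · have hDf : DifferentiableOn ℂ (normDeriv f) UpperH :=
      (hf.deriv isOpen_upperH).const_mul _
    have hDg : DifferentiableOn ℂ (normDeriv g) UpperH :=
      (hg.deriv isOpen_upperH).const_mul _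
    exact (((differentiableOn_const _).mul hf).mul hDg).sub
      (((differentiableOn_const _).mul hDf).mul hg)
  · intro γ hγ z hz
    simp only [hfk γ hγ z hz, hgl γ hγ z hz, normDeriv_apply_moebius hf hfk hγ hz,
      normDeriv_apply_moebius hg hgl hγ hz]
    ring
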